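/- Under the hypotheses of the previous decomposition, the CKA similarity satisfies ‖YᵀX‖_F² / (‖XᵀX‖_F ‖YᵀY‖_F) ≤ 2 − (1/N²)·(Σ_{i,j}(⟨xᵢ,xⱼ⟩ − ⟨yᵢ,yⱼ⟩))², where xᵢ, yᵢ are rows of the Gram-normalized matrices. Equivalently, maximizing CKA minimizes an upper bound of the (biased, linear-kernel) MMD statistic squared up to constants. -/
import Mathlib
open Matrix BigOperators

noncomputable def frob {m n : ℕ} (A : Matrix (Fin m) (Fin n) ℝ) : ℝ :=
  Real.sqrt (∑ i, ∑ j, (A i j) ^ 2)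

lemma frob_nonneg {m n : ℕ} (A : Matrix (Fin m) (Fin n) ℝ) : 0 ≤ frob A :=
  Real.sqrt_nonneg _

lemma sum_sq_nonneg {m n : ℕ} (A : Matrix (Fin m) (Fin n) ℝ) :
    0 ≤ ∑ i, ∑ j, (A i j) ^ 2 := by positivity

lemma frob_sq {m n : ℕ} (A : Matrix (Fin m) (Fin n) ℝ) :
    frob A ^ 2 = ∑ i, ∑ j, (A i j) ^ 2 :=
  Real.sq_sqrt (sum_sq_nonneg A)

lemma sum_sq_eq_trace {m n : ℕ} (A : Matrix (Fin m) (Fin n) ℝ) :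
    ∑ i, ∑ j, (A i j) ^ 2 = trace (Aᵀ * A) := by
  simp only [Matrix.trace, Matrix.diag, Matrix.mul_apply, Matrix.transpose_apply, sq]
  exact Finset.sum_comm

lemma sum_mul_eq_trace {m n : ℕ} (A B : Matrix (Fin m) (Fin n) ℝ) :
    ∑ i, ∑ j, A i j * B i j = trace (Aᵀ * B) := by
  simp only [Matrix.trace, Matrix.diag, Matrix.mul_apply, Matrix.transpose_apply]
  exact Finset.sum_comm

lemma frob_eq {m n : ℕ} (A : Matrix (Fin m) (Fin n) ℝ) :
    frob A = Real.sqrt (trace (Aᵀ * A)) := by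
  rw [frob, sum_sq_eq_trace]

lemma frob_gram_transpose {m n : ℕ} (X : Matrix (Fin m) (Fin n) ℝ) :
    frob (Xᵀ * X) = frob (X * Xᵀ) := by
  rw [frob_eq, frob_eq]
  congr 1
  rw [transpose_mul, transpose_transpose, transpose_mul, transpose_transpose]
  calc trace (Xᵀ*X*(Xᵀ*X)) = trace ((Xᵀ*(X*Xᵀ))*X) := by
        rw [Matrix.mul_assoc, Matrix.mul_assoc, Matrix.mul_assoc]
    _ = trace (X*(Xᵀ*(X*Xᵀ))) := trace_mul_comm _ _
    _ = trace (X*Xᵀ*(X*Xᵀ)) := by rw [Matrix.mul_assoc]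

lemma frob_cross_sq {m p q : ℕ} (X : Matrix (Fin m) (Fin p) ℝ)
    (Y : Matrix (Fin m) (Fin q) ℝ) :
    frob (Yᵀ * X) ^ 2 = ∑ i, ∑ j, (X*Xᵀ) i j * (Y*Yᵀ) i j := by
  rw [frob_sq, sum_sq_eq_trace, sum_mul_eq_trace]
  rw [transpose_mul, transpose_transpose, transpose_mul, transpose_transpose]
  calc trace (Xᵀ*Y*(Yᵀ*X)) = trace ((Xᵀ*(Y*Yᵀ))*X) := by
        rw [Matrix.mul_assoc, Matrix.mul_assoc, Matrix.mul_assoc]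
    _ = trace (X*(Xᵀ*(Y*Yᵀ))) := trace_mul_comm _ _
    _ = trace (X*Xᵀ*(Y*Yᵀ)) := by rw [Matrix.mul_assoc]

theorem cka_mmd_upper_bound {N P Q : ℕ}
    (X : Matrix (Fin N) (Fin P) ℝ) (Y : Matrix (Fin N) (Fin Q) ℝ)
    (hX : frob (X * Xᵀ) ≠ 0) (hY : frob (Y * Yᵀ) ≠ 0)
    (x : Fin N → Fin P → ℝ) (y : Fin N → Fin Q → ℝ)
    (hx : ∀ i p, x i p = X i p / Real.sqrt (frob (X * Xᵀ)))
    (hy : ∀ i q, y i q = Y i q / Real.sqrt (frob (Y * Yᵀ))) :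
    (frob (Yᵀ * X)) ^ 2 / (frob (Xᵀ * X) * frob (Yᵀ * Y)) ≤
      2 - (1 / (N : ℝ) ^ 2) *
        (∑ i, ∑ j,
          ((∑ p, x i p * x j p) - (∑ q, y i q * y j q))) ^ 2 := by
  rcases Nat.eq_zero_or_pos N with hN | hN
  · exfalso; apply hX; subst hN; simp [frob]
  set a := frob (X * Xᵀ) with ha_def
  set b := frob (Y * Yᵀ) with hb_def
  have ha : 0 < a := (frob_nonneg _).lt_of_ne' hX
  have hb : 0 < b := (frob_nonneg _).lt_of_ne' hY
  have hxx : ∀ i j, ∑ p, x i p * x j p = (X*Xᵀ) i j / a := by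
    intro i j
    simp only [hx, ← ha_def, div_mul_div_comm, Real.mul_self_sqrt ha.le]
    rw [← Finset.sum_div, Matrix.mul_apply]
    simp [Matrix.transpose_apply]
  have hyy : ∀ i j, ∑ q, y i q * y j q = (Y*Yᵀ) i j / b := by
    intro i j
    simp only [hy, ← hb_def, div_mul_div_comm, Real.mul_self_sqrt hb.le]
    rw [← Finset.sum_div, Matrix.mul_apply]
    simp [Matrix.transpose_apply]
  simp only [hxx, hyy, frob_gram_transpose]
  set T := frob (Yᵀ * X) ^ 2 with hT_def
  have hT0 : 0 ≤ T := sq_nonneg _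
  set C := T / (a * b) with hC_def
  have hC0 : 0 ≤ C := div_nonneg hT0 (by positivity)
  set d : Fin N → Fin N → ℝ := fun i j => (X*Xᵀ) i j / a - (Y*Yᵀ) i j / b with hd
  have hsumsq : ∑ i, ∑ j, (d i j) ^ 2 = 2 - 2 * C := by
    have expand : ∀ i j, (d i j)^2 =
        ((X*Xᵀ) i j)^2 / a^2 - 2 * ((X*Xᵀ) i j * ((Y*Yᵀ) i j)) / (a*b)
          + ((Y*Yᵀ) i j)^2 / b^2 := by
      intro i j; simp only [hd]; field_simp; ring
    simp only [expand, Finset.sum_add_distrib, Finset.sum_sub_distrib]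
    simp only [← Finset.sum_div, ← Finset.mul_sum]
    rw [show (∑ i, ∑ j, ((X*Xᵀ) i j)^2) = a^2 from (frob_sq _).symm,
        show (∑ i, ∑ j, ((Y*Yᵀ) i j)^2) = b^2 from (frob_sq _).symm,
        show (∑ i, ∑ j, (X*Xᵀ) i j * (Y*Yᵀ) i j) = T from (frob_cross_sq X Y).symm]
    rw [hC_def]
    field_simp
    ring
  set S := ∑ i, ∑ j, d i j with hS
  have hCS : S ^ 2 ≤ (N:ℝ)^2 * (2 - 2*C) := by
    rw [← hsumsq]
    have h := Finset.sum_mul_sq_le_sq_mul_sq Finset.univ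
      (fun _ : Fin N × Fin N => (1:ℝ)) (fun p => d p.1 p.2)
    simp only [one_mul, one_pow, Finset.sum_const, Finset.card_univ, Fintype.card_prod,
      Fintype.card_fin, nsmul_eq_mul, Nat.cast_mul] at h
    rw [Fintype.sum_prod_type, Fintype.sum_prod_type] at h
    calc S^2 ≤ ((N:ℝ)*(N:ℝ)*1) * ∑ i, ∑ j, d i j ^ 2 := h
      _ = (N:ℝ)^2 * ∑ i, ∑ j, d i j ^ 2 := by ring
  have hN2 : (0:ℝ) < (N:ℝ)^2 := by positivity
  have h1 : (1/(N:ℝ)^2) * S^2 ≤ 2 - 2*C := by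
    calc (1/(N:ℝ)^2) * S^2 ≤ (1/(N:ℝ)^2) * ((N:ℝ)^2 * (2 - 2*C)) :=
          mul_le_mul_of_nonneg_left hCS (by positivity)
      _ = 2 - 2*C := by field_simp
  linarith
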